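/- For integers L ≥ 1, r ≥ 1, real ρ > 0, and 0 ≤ t ≤ L-1, the total NDT δ = R₁/ρ + R₂/d with R₁ = C(L,t+1)/(r·C(L,t)), R₂ = r·C(L-1,t)/(r·C(L,t)), and d = r·C(L-1,t)/((r-1)·C(L-1,t) + C(L,t+1)) equals δ = ((L-t)/r)·((r-1)/L + (1/(t+1))·(1 + 1/ρ)). -/
import Mathlib


theorem total_ndt_closed_form (L r t : ℕ) (ρ : ℝ) (hL : 1 ≤ L) (hr : 1 ≤ r)
    (hρ : 0 < ρ) (ht : t ≤ L - 1)
    (R1 R2 d : ℝ)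
    (hR1 : R1 = (Nat.choose L (t + 1) : ℝ) / ((r : ℝ) * (Nat.choose L t : ℝ)))
    (hR2 : R2 = (r : ℝ) * (Nat.choose (L - 1) t : ℝ) / ((r : ℝ) * (Nat.choose L t : ℝ)))
    (hd : d = (r : ℝ) * (Nat.choose (L - 1) t : ℝ) /
        (((r : ℝ) - 1) * (Nat.choose (L - 1) t : ℝ) + (Nat.choose L (t + 1) : ℝ))) :
    R1 / ρ + R2 / d
      = (((L : ℝ) - t) / r) * (((r : ℝ) - 1) / L + (1 / ((t : ℝ) + 1)) * (1 + 1 / ρ)) := by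
  have htL : t ≤ L := le_trans ht (Nat.sub_le L 1)
  have ht1L : t + 1 ≤ L := by omega
  have hL1 : t ≤ L - 1 := ht
  -- key binomial identities
  have key1 : (L.choose (t + 1) : ℝ) * ((t : ℝ) + 1) = (L.choose t : ℝ) * ((L : ℝ) - t) := by
    have := Nat.choose_succ_right_eq L t
    have h' : (L.choose (t + 1) * (t + 1) : ℕ) = L.choose t * (L - t) := this
    have := congrArg (Nat.cast : ℕ → ℝ) h'
    push_cast [Nat.cast_sub htL] at this
    linarith [this]
  have key2 : (L : ℝ) * ((L - 1).choose t : ℝ) = (L.choose t : ℝ) * ((L : ℝ) - t) := by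
    obtain ⟨M, rfl⟩ : ∃ M, L = M + 1 := ⟨L - 1, by omega⟩
    have h' : (M + 1) * (M.choose t) = (M + 1).choose (t + 1) * (t + 1) :=
      Nat.add_one_mul_choose_eq M t
    have h'' : ((M + 1).choose (t + 1) * (t + 1) : ℕ) = (M + 1).choose t * (M + 1 - t) :=
      Nat.choose_succ_right_eq (M + 1) t
    have hc := congrArg (Nat.cast : ℕ → ℝ) (h'.trans h'')
    push_cast [Nat.cast_sub htL] at hc ⊢
    linarith [hc]
  -- positivity
  have ha : (0 : ℝ) < (L.choose t : ℝ) := by exact_mod_cast Nat.choose_pos htL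
  have hb : (0 : ℝ) < (L.choose (t + 1) : ℝ) := by exact_mod_cast Nat.choose_pos ht1L
  have hc : (0 : ℝ) < ((L - 1).choose t : ℝ) := by exact_mod_cast Nat.choose_pos hL1
  have hrR : (1 : ℝ) ≤ (r : ℝ) := by exact_mod_cast hr
  have hrpos : (0 : ℝ) < (r : ℝ) := by linarith
  have hLpos : (0 : ℝ) < (L : ℝ) := by exact_mod_cast hL
  have ht1 : (0 : ℝ) < (t : ℝ) + 1 := by positivity
  have hden : (0 : ℝ) < ((r : ℝ) - 1) * ((L - 1).choose t : ℝ) + (L.choose (t + 1) : ℝ) := by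
    nlinarith
  have hLt : (0 : ℝ) < (L : ℝ) - t := by
    have : t < L := by omega
    exact sub_pos.mpr (by exact_mod_cast this)
  have hb' : (L.choose (t + 1) : ℝ) = (L.choose t : ℝ) * ((L : ℝ) - t) / ((t : ℝ) + 1) := by
    field_simp
    linarith [key1]
  have hc' : ((L - 1).choose t : ℝ) = (L.choose t : ℝ) * ((L : ℝ) - t) / (L : ℝ) := by
    field_simp
    linarith [key2]
  subst hR1 hR2 hd
  rw [hb', hc']
  have h1 : ((t : ℝ) + 1) ≠ 0 := ne_of_gt ht1
  have h2 : (L : ℝ) ≠ 0 := ne_of_gt hLpos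
  have h3 : (r : ℝ) ≠ 0 := ne_of_gt hrpos
  have h4 : (L.choose t : ℝ) ≠ 0 := ne_of_gt ha
  have h5 : ((L : ℝ) - t) ≠ 0 := ne_of_gt hLt
  have h6 : ρ ≠ 0 := ne_of_gt hρ
  have hden' : ((r : ℝ) - 1) * ((L.choose t : ℝ) * ((L : ℝ) - t) / (L : ℝ)) +
      (L.choose t : ℝ) * ((L : ℝ) - t) / ((t : ℝ) + 1) ≠ 0 := by
    rw [← hb', ← hc']; exact ne_of_gt hden
  have hnum : (r : ℝ) * ((L.choose t : ℝ) * ((L : ℝ) - t) / (L : ℝ)) ≠ 0 := by positivity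
  field_simp
  ring
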